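/- arXiv:math/0311099 — 3 statements merged into one kernel-verified Lean document; each statement's English description precedes it below -/
import Mathlib

section
/- Let F be a finite field, A a commutative group (written additively), and s an A-valued symbol on F. Then 2 · s(x, y) = 0 for all x, y ∈ Fˣ. -/
/-!
A symbol is bilinear, and the Steinberg-type identity `s(x, -x) = 0` (from
`-x = (1 - x) / (1 - x⁻¹)`) makes it antisymmetric, so `2 • s(g, g) = 0`. The unit group of a
finite field is cyclic, and bilinearity reduces every `s(x, y)` to a multiple of `s(g, g)` for a
generator `g`.
-/

def IsAddSymbol {F A : Type*} [Field F] [AddCommGroup A] (s : Fˣ → Fˣ → A) : Prop :=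
  (∀ x x' y : Fˣ, s (x * x') y = s x y + s x' y) ∧
  (∀ x y y' : Fˣ, s x (y * y') = s x y + s x y') ∧
  (∀ x y : Fˣ, (x : F) + (y : F) = 1 → s x y = 0)

namespace IsAddSymbol

variable {F A : Type*} [Field F] [AddCommGroup A] {s : Fˣ → Fˣ → A}

def leftHom (hs : IsAddSymbol s) (y : Fˣ) : Additive Fˣ →+ A :=
  AddMonoidHom.mk' (fun x => s x.toMul y) fun x x' => hs.1 x.toMul x'.toMul y

def rightHom (hs : IsAddSymbol s) (x : Fˣ) : Additive Fˣ →+ A :=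
  AddMonoidHom.mk' (fun y => s x y.toMul) fun y y' => hs.2.1 x y.toMul y'.toMul

theorem apply_zpow_left (hs : IsAddSymbol s) (n : ℤ) (x y : Fˣ) :
    s (x ^ n) y = n • s x y :=
  (hs.leftHom y).map_zsmul n (Additive.ofMul x)

theorem apply_zpow_right (hs : IsAddSymbol s) (n : ℤ) (x y : Fˣ) :
    s x (y ^ n) = n • s x y :=
  (hs.rightHom x).map_zsmul n (Additive.ofMul y)

theorem apply_one_left (hs : IsAddSymbol s) (y : Fˣ) : s 1 y = 0 := by
  simpa using hs.apply_zpow_left 0 1 y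

theorem apply_inv_left (hs : IsAddSymbol s) (x y : Fˣ) : s x⁻¹ y = -s x y := by
  simpa using hs.apply_zpow_left (-1) x y

theorem apply_inv_right (hs : IsAddSymbol s) (x y : Fˣ) : s x y⁻¹ = -s x y := by
  simpa using hs.apply_zpow_right (-1) x y

theorem apply_neg_self (hs : IsAddSymbol s) (x : Fˣ) : s x (-x) = 0 := by
  obtain rfl | hx := eq_or_ne x 1
  · exact hs.apply_one_left _
  have hx₁ : (x : F) ≠ 1 := Units.val_eq_one.not.2 hx
  have hx₁' : (x : F)⁻¹ ≠ 1 := inv_ne_one.2 hx₁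
  let a := Units.mk0 (1 - (x : F)) (sub_ne_zero.2 hx₁.symm)
  let b := Units.mk0 (1 - (x : F)⁻¹) (sub_ne_zero.2 hx₁'.symm)
  have hneg : -x = a * b⁻¹ := by
    ext
    simp only [Units.val_neg, Units.val_mul, Units.val_inv_eq_inv_val, Units.val_mk0, a, b]
    field_simp
    ring
  have ha : s x a = 0 := hs.2.2 x a (by simp [a])
  have hb : s x b = 0 := by
    rw [← neg_eq_zero, ← hs.apply_inv_left]
    exact hs.2.2 _ _ (by simp [b])
  rw [hneg, hs.2.1, hs.apply_inv_right, ha, hb, neg_zero, add_zero]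

theorem apply_add_apply_swap (hs : IsAddSymbol s) (x y : Fˣ) : s x y + s y x = 0 := by
  have hx : s x (-(x * y)) = s x y := by
    rw [← neg_mul, hs.2.1, hs.apply_neg_self, zero_add]
  have hy : s y (-(x * y)) = s y x := by
    rw [← mul_neg, hs.2.1, hs.apply_neg_self, add_zero]
  rw [← hx, ← hy, ← hs.1, hs.apply_neg_self]

theorem two_nsmul_apply_of_isCyclic [IsCyclic Fˣ] (hs : IsAddSymbol s) (x y : Fˣ) :
    2 • s x y = 0 := by
  obtain ⟨g, hg⟩ := IsCyclic.exists_generator (α := Fˣ)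
  obtain ⟨i, rfl⟩ := hg x
  obtain ⟨j, rfl⟩ := hg y
  have hgg : 2 • s g g = 0 := by rw [two_nsmul, hs.apply_add_apply_swap]
  rw [hs.apply_zpow_left, hs.apply_zpow_right, smul_comm 2 i, smul_comm 2 j, hgg,
    smul_zero, smul_zero]

end IsAddSymbol

/-- Any symbol on a finite field is killed by 2. -/
theorem symbol_two_torsion_of_finite {F A : Type*} [Field F] [Finite F] [AddCommGroup A]
    (s : Fˣ → Fˣ → A) (hs : IsAddSymbol s) (x y : Fˣ) : 2 • s x y = 0 :=
  hs.two_nsmul_apply_of_isCyclic x y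
end

section
/- Let k be a field and F = k(T) the field of rational functions over k. For x ∈ Fˣ, write x = f/g with f, g nonzero polynomials and define c(x) ∈ kˣ as leadingCoeff(f)/leadingCoeff(g); c(x) is well defined (independent of the representation) and c : Fˣ → kˣ is a group homomorphism. Then for every commutative group A (written additively) and every A-valued symbol t on k, the map (x, y) ↦ t(c(x), c(y)) is an A-valued symbol on F = k(T). -/
namespace IsAddSymbol

variable {F A : Type*} [Field F] [AddCommGroup A] {t : Fˣ → Fˣ → A}

lemma map_one_left (ht : IsAddSymbol t) (y : Fˣ) : t 1 y = 0 := by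
  simpa using ht.1 1 1 y

lemma map_one_right (ht : IsAddSymbol t) (x : Fˣ) : t x 1 = 0 := by
  simpa using ht.2.1 x 1 1

lemma map_inv_right (ht : IsAddSymbol t) (x y : Fˣ) : t x y⁻¹ = -t x y := by
  rw [eq_neg_iff_add_eq_zero, ← ht.2.1, inv_mul_cancel, ht.map_one_right]

lemma map_inv_left (ht : IsAddSymbol t) (x y : Fˣ) : t x⁻¹ y = -t x y := by
  rw [eq_neg_iff_add_eq_zero, ← ht.1, inv_mul_cancel, ht.map_one_left]

/-- Steinberg's identity `{u, -u} = 0`, from `-u = (1 - u) / (1 - u⁻¹)`. -/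
lemma map_neg_right_self (ht : IsAddSymbol t) (u : Fˣ) : t u (-u) = 0 := by
  obtain rfl | hu := eq_or_ne u 1
  · exact ht.map_one_left _
  have hv : 1 - (u : F) ≠ 0 := sub_ne_zero.mpr (Ne.symm (Units.val_eq_one.not.mpr hu))
  have hw : 1 - ((u⁻¹ : Fˣ) : F) ≠ 0 :=
    sub_ne_zero.mpr (Ne.symm (Units.val_eq_one.not.mpr (inv_ne_one.mpr hu)))
  set v := Units.mk0 _ hv
  set w := Units.mk0 _ hw
  have hneg : -u = v * w⁻¹ := by
    ext
    rw [Units.val_neg, Units.val_mul, Units.val_inv_eq_inv_val, ← div_eq_mul_inv,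
      eq_div_iff w.ne_zero, Units.val_mk0, Units.val_mk0]
    linear_combination u.mul_inv
  have huv : t u v = 0 := ht.2.2 u v (add_sub_cancel _ _)
  have huw : t u w = 0 := by
    rw [← neg_eq_zero, ← ht.map_inv_left]
    exact ht.2.2 u⁻¹ w (add_sub_cancel _ _)
  rw [hneg, ht.2.1, ht.map_inv_right, huv, huw, neg_zero, add_zero]

end IsAddSymbol

lemma IsAddSymbol.comp_monoidHom {F K A : Type*} [Field F] [Field K] [AddCommGroup A]
    {t : Kˣ → Kˣ → A} (ht : IsAddSymbol t) (c : Fˣ →* Kˣ)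
    (hc : ∀ x y : Fˣ, (x : F) + y = 1 →
      (c x : K) = 1 ∨ (c y : K) = 1 ∨ (c x : K) + c y = 1 ∨ (c x : K) + c y = 0) :
    IsAddSymbol fun x y => t (c x) (c y) := by
  refine ⟨fun x x' y => by simp only [map_mul, ht.1], fun x y y' => by simp only [map_mul, ht.2.1],
    fun x y hxy => ?_⟩
  show t (c x) (c y) = 0
  rcases hc x y hxy with h | h | h | h
  · rw [Units.val_eq_one.mp h, ht.map_one_left]
  · rw [Units.val_eq_one.mp h, ht.map_one_right]
  · exact ht.2.2 _ _ h
  · rw [show c y = -c x from Units.ext (eq_neg_of_add_eq_zero_right h), ht.map_neg_right_self]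

open Polynomial

lemma Polynomial.leadingCoeff_add_cases {R : Type*} [Semiring R] (p q : R[X]) :
    (p + q).leadingCoeff = p.leadingCoeff ∨ (p + q).leadingCoeff = q.leadingCoeff ∨
      (p + q).leadingCoeff = p.leadingCoeff + q.leadingCoeff ∨
      p.leadingCoeff + q.leadingCoeff = 0 := by
  rcases lt_trichotomy p.degree q.degree with h | h | h
  · exact .inr <| .inl <| leadingCoeff_add_of_degree_lt h
  · by_cases hlc : p.leadingCoeff + q.leadingCoeff = 0
    · exact .inr <| .inr <| .inr hlc
    · exact .inr <| .inr <| .inl <| leadingCoeff_add_of_degree_eq h hlc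
  · exact .inl <| leadingCoeff_add_of_degree_lt' h

namespace RatFunc

variable {K : Type*} [Field K]

noncomputable def leadingCoeffHom : RatFunc K →*₀ K :=
  liftMonoidWithZeroHom { Polynomial.leadingCoeffHom with map_zero' := leadingCoeff_zero }
    fun _ hp => mem_nonZeroDivisors_of_ne_zero <| leadingCoeff_ne_zero.mpr <|
      nonZeroDivisors.ne_zero hp

lemma leadingCoeffHom_div (p q : K[X]) :
    leadingCoeffHom (algebraMap K[X] (RatFunc K) p / algebraMap K[X] (RatFunc K) q) =
      p.leadingCoeff / q.leadingCoeff :=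
  liftMonoidWithZeroHom_apply_div _ _ _ _

lemma exists_monic_common_denom (x y : RatFunc K) : ∃ p q d : K[X], d.Monic ∧
    x = algebraMap K[X] (RatFunc K) p / algebraMap K[X] (RatFunc K) d ∧
    y = algebraMap K[X] (RatFunc K) q / algebraMap K[X] (RatFunc K) d := by
  have hx := algebraMap_ne_zero (denom_ne_zero x)
  have hy := algebraMap_ne_zero (denom_ne_zero y)
  refine ⟨x.num * y.denom, y.num * x.denom, x.denom * y.denom,
    x.monic_denom.mul y.monic_denom, ?_, ?_⟩
  · rw [map_mul, map_mul, mul_div_mul_right _ _ hy, num_div_denom]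
  · rw [map_mul, map_mul, mul_comm (algebraMap _ _ x.denom), mul_div_mul_right _ _ hx,
      num_div_denom]

lemma leadingCoeffHom_add_cases (x y : RatFunc K) :
    leadingCoeffHom (x + y) = leadingCoeffHom x ∨ leadingCoeffHom (x + y) = leadingCoeffHom y ∨
      leadingCoeffHom (x + y) = leadingCoeffHom x + leadingCoeffHom y ∨
      leadingCoeffHom x + leadingCoeffHom y = 0 := by
  obtain ⟨p, q, d, hd, rfl, rfl⟩ := exists_monic_common_denom x y
  simp only [← add_div, ← map_add, leadingCoeffHom_div, hd.leadingCoeff, div_one]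
  exact leadingCoeff_add_cases p q

end RatFunc

/-- There is a (well-defined) group homomorphism `c : k(T)ˣ → kˣ` with
`c(f/g) = leadingCoeff f / leadingCoeff g` for nonzero polynomials `f, g`, and for every
symbol `t` on `k`, the map `(x, y) ↦ t(c x, c y)` is a symbol on `k(T)`. -/
theorem ratFunc_leadingCoeff_symbol (k : Type*) [Field k] :
    ∃ c : (RatFunc k)ˣ →* kˣ,
      (∀ (x : (RatFunc k)ˣ) (f g : Polynomial k), f ≠ 0 → g ≠ 0 →
        (x : RatFunc k) =
          algebraMap (Polynomial k) (RatFunc k) f / algebraMap (Polynomial k) (RatFunc k) g →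
        (c x : k) = f.leadingCoeff / g.leadingCoeff) ∧
      ∀ (A : Type*) [AddCommGroup A] (t : kˣ → kˣ → A), IsAddSymbol t →
        IsAddSymbol (fun x y : (RatFunc k)ˣ => t (c x) (c y)) := by
  let c : (RatFunc k)ˣ →* kˣ := Units.map (RatFunc.leadingCoeffHom : RatFunc k →*₀ k).toMonoidHom
  refine ⟨c, fun x f g _ _ hx =>
      (congrArg RatFunc.leadingCoeffHom hx).trans (RatFunc.leadingCoeffHom_div f g),
    fun A _ t ht => ht.comp_monoidHom c fun x y hxy => ?_⟩
  have h := RatFunc.leadingCoeffHom_add_cases (x : RatFunc k) y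
  rw [hxy, map_one] at h
  simpa [c, eq_comm] using h
end

section
/- Let x, y ∈ ℚ be nonzero. The conic x·R² + y·S² = 1 has a solution (R, S) ∈ ℚ × ℚ if and only if it has a solution over ℝ and a solution over ℚ_p for every prime p (including p = 2). -/
/-!
Legendre's descent. Write `x = a s²`, `y = b w²` with `a, b` squarefree integers; the conic
`a R² + b S² = 1` is solvable over a field `K` exactly when `b` is a norm `u² - a v²` from
`K(√a)`. Assume `|a| ≤ |b|` and `|b| ≥ 2`. At each prime `p ∣ b` the valuation of `b` is odd,
so a `p`-adic solution forces `a` to be a square mod `p`; by the Chinese remainder theorem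
`a ≡ t² (mod b)` with `|t| ≤ |b| / 2`. Then `t² - a = b d k²` with `d` squarefree and
`|d| < |b|`, and since `b d` is a norm, the conics for `(a, b)` and `(a, d)` are solvable over
exactly the same fields. Induction on `|a| + |b|` ends at `a, b = ±1`, where the real solution
rules out `a = b = -1`.
-/

section CommRing

variable {R : Type*} [CommRing R]

def ConicSolvable (a b : R) : Prop := ∃ x y : R, a * x ^ 2 + b * y ^ 2 = 1

/-- `u² - a v²` is the norm form of `R[√a]`. -/
def IsNorm (a c : R) : Prop := ∃ u v : R, u ^ 2 - a * v ^ 2 = c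

theorem conicSolvable_comm {a b : R} : ConicSolvable a b ↔ ConicSolvable b a := by
  constructor <;> exact fun ⟨x, y, h⟩ ↦ ⟨y, x, by linear_combination h⟩

theorem ConicSolvable.map {S : Type*} [CommRing S] (f : R →+* S) {a b : R}
    (h : ConicSolvable a b) : ConicSolvable (f a) (f b) := by
  obtain ⟨x, y, hxy⟩ := h
  exact ⟨f x, f y, by simpa using congrArg f hxy⟩

theorem IsNorm.mul {a c d : R} (hc : IsNorm a c) (hd : IsNorm a d) : IsNorm a (c * d) := by
  obtain ⟨u, v, rfl⟩ := hc
  obtain ⟨s, t, rfl⟩ := hd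
  exact ⟨u * s + a * v * t, u * t + v * s, by ring⟩

theorem IsNorm.mul_sq {a c : R} (hc : IsNorm a c) (k : R) : IsNorm a (c * k ^ 2) :=
  hc.mul ⟨k, 0, by ring⟩

end CommRing

section Field

variable {K : Type*} [Field K]

theorem conicSolvable_mul_sq_left {a b s : K} (hs : s ≠ 0) :
    ConicSolvable (a * s ^ 2) b ↔ ConicSolvable a b := by
  constructor
  · exact fun ⟨x, y, h⟩ ↦ ⟨s * x, y, by linear_combination h⟩
  · exact fun ⟨x, y, h⟩ ↦ ⟨x / s, y, by field_simp; linear_combination h⟩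

theorem conicSolvable_mul_sq_right {a b s : K} (hs : s ≠ 0) :
    ConicSolvable a (b * s ^ 2) ↔ ConicSolvable a b := by
  rw [conicSolvable_comm, conicSolvable_mul_sq_left hs, conicSolvable_comm]

theorem IsNorm.inv {a c : K} (hc : IsNorm a c) : IsNorm a c⁻¹ := by
  rcases eq_or_ne c 0 with rfl | hc0
  · simpa using hc
  · simpa [sq, hc0] using hc.mul_sq c⁻¹

theorem IsNorm.of_mul_left {a c d : K} (hcd : IsNorm a (c * d)) (hc : IsNorm a c) (hc0 : c ≠ 0) :
    IsNorm a d := by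
  simpa [hc0] using hc.inv.mul hcd

/-- `c = ((c + 1) / 2)² - ((c - 1) / 2)²`. -/
theorem isNorm_of_sq_eq [NeZero (2 : K)] {a r : K} (hr : r ≠ 0) (h : r ^ 2 = a) (c : K) :
    IsNorm a c :=
  ⟨(c + 1) / 2, (c - 1) / (2 * r), by subst h; field_simp; ring⟩

theorem conicSolvable_iff_isNorm [NeZero (2 : K)] {a b : K} (ha : a ≠ 0) (hb : b ≠ 0) :
    ConicSolvable a b ↔ IsNorm a b := by
  constructor
  · rintro ⟨x, y, h⟩
    rcases eq_or_ne y 0 with rfl | hy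
    · have hx : x ≠ 0 := by rintro rfl; simp at h
      exact isNorm_of_sq_eq (inv_ne_zero hx) (by field_simp; linear_combination -h) b
    · exact ⟨y⁻¹, x / y, by field_simp; linear_combination -h⟩
  · rintro ⟨u, v, rfl⟩
    rcases eq_or_ne u 0 with rfl | hu
    · have hv : v ≠ 0 := by rintro rfl; simp at hb
      exact ⟨(1 + a⁻¹) / 2, (a⁻¹ - 1) / (2 * v), by field_simp; ring⟩
    · exact ⟨v / u, u⁻¹, by field_simp; ring⟩

theorem conicSolvable_iff_of_mul_eq_sq_sub [NeZero (2 : K)] {a b c t : K} (ha : a ≠ 0)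
    (hb : b ≠ 0) (hc : c ≠ 0) (h : b * c = t ^ 2 - a) : ConicSolvable a b ↔ ConicSolvable a c := by
  have hbc : IsNorm a (b * c) := ⟨t, 1, by rw [h]; ring⟩
  rw [conicSolvable_iff_isNorm ha hb, conicSolvable_iff_isNorm ha hc]
  exact ⟨fun hb' ↦ hbc.of_mul_left hb' hb,
    fun hc' ↦ (mul_comm b c ▸ hbc).of_mul_left hc' hc⟩

end Field

namespace PadicInt

variable {p : ℕ} [Fact p.Prime]

theorem isSquare_toZMod_of_not_isUnit_sq_sub_mul_sq {a u v : ℤ_[p]} (huv : IsUnit u ∨ IsUnit v)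
    (h : ¬IsUnit (u ^ 2 - a * v ^ 2)) : IsSquare (toZMod a) := by
  have hker : toZMod (u ^ 2 - a * v ^ 2) = 0 := by
    rwa [← RingHom.mem_ker, ker_toZMod, IsLocalRing.mem_maximalIdeal, mem_nonunits_iff]
  have hsq : toZMod u ^ 2 = toZMod a * toZMod v ^ 2 := by
    simpa [sub_eq_zero] using hker
  have hv : toZMod v ≠ 0 := by
    intro hv
    have hu : toZMod u = 0 := by simpa [hv] using hsq
    rcases huv with hu' | hv'
    · exact (hu'.map toZMod).ne_zero hu
    · exact (hv'.map toZMod).ne_zero hv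
  exact ⟨toZMod u / toZMod v, by field_simp; linear_combination -hsq⟩

end PadicInt

namespace Padic

variable {p : ℕ} [Fact p.Prime]

theorem norm_eq_one_iff_valuation_eq_zero {x : ℚ_[p]} (hx : x ≠ 0) :
    ‖x‖ = 1 ↔ x.valuation = 0 := by
  rw [norm_eq_zpow_neg_valuation hx, zpow_eq_one_iff_right₀ (Nat.cast_nonneg p)
    (by exact_mod_cast (Fact.out : p.Prime).ne_one), neg_eq_zero]

/-- Dividing by whichever of `u`, `v` is larger makes both integral and one of them a unit;
the parity of the valuation of `b` survives the division by a square. -/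
theorem isSquare_toZMod_of_sq_sub_mul_sq_eq_of_le {a : ℤ_[p]} {u v w b : ℚ_[p]}
    (hw : w = u ∨ w = v) (hu : ‖u‖ ≤ ‖w‖) (hv : ‖v‖ ≤ ‖w‖) (hb : Odd b.valuation)
    (h : u ^ 2 - a * v ^ 2 = b) : IsSquare (PadicInt.toZMod a) := by
  have hb0 : b ≠ 0 := by rintro rfl; simp at hb
  have hw0 : w ≠ 0 := by
    rintro rfl
    rw [norm_zero, norm_le_zero_iff] at hu hv
    simp [hu, hv] at h
    exact hb0 h.symm
  have hint {x : ℚ_[p]} (hx : ‖x‖ ≤ ‖w‖) : ‖x / w‖ ≤ 1 := by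
    rw [norm_div]; exact div_le_one_of_le₀ hx (norm_nonneg _)
  set U : ℤ_[p] := ⟨u / w, hint hu⟩
  set V : ℤ_[p] := ⟨v / w, hint hv⟩
  apply PadicInt.isSquare_toZMod_of_not_isUnit_sq_sub_mul_sq (u := U) (v := V)
  · rcases hw with rfl | rfl
    · left; exact PadicInt.isUnit_iff.mpr (by simp [U, hw0])
    · right; exact PadicInt.isUnit_iff.mpr (by simp [V, hw0])
  · rw [PadicInt.isUnit_iff, PadicInt.norm_def]
    have hB : ((U ^ 2 - a * V ^ 2 : ℤ_[p]) : ℚ_[p]) = b * (w ^ 2)⁻¹ := by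
      have hU : (U : ℚ_[p]) = u / w := rfl
      have hV : (V : ℚ_[p]) = v / w := rfl
      rw [PadicInt.coe_sub, PadicInt.coe_mul, PadicInt.coe_pow, PadicInt.coe_pow, hU, hV, ← h]
      field_simp
    rw [hB, norm_eq_one_iff_valuation_eq_zero (by simp [hb0, hw0]),
      valuation_mul hb0 (by simp [hw0]), valuation_inv, valuation_pow]
    rintro hval
    rcases hb with ⟨k, hk⟩
    omega

theorem isSquare_toZMod_of_sq_sub_mul_sq_eq {a : ℤ_[p]} {u v b : ℚ_[p]} (hb : Odd b.valuation)
    (h : u ^ 2 - a * v ^ 2 = b) : IsSquare (PadicInt.toZMod a) := by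
  rcases le_total ‖u‖ ‖v‖ with huv | hvu
  · exact isSquare_toZMod_of_sq_sub_mul_sq_eq_of_le (Or.inr rfl) huv le_rfl hb h
  · exact isSquare_toZMod_of_sq_sub_mul_sq_eq_of_le (Or.inl rfl) le_rfl hvu hb h

end Padic

theorem padicValInt_eq_one_of_squarefree {p : ℕ} [Fact p.Prime] {b : ℤ} (hb : Squarefree b)
    (hpb : (p : ℤ) ∣ b) : padicValInt p b = 1 := by
  have hp : ¬IsUnit (p : ℤ) := (Nat.prime_iff_prime_int.mp Fact.out).not_isUnit
  have h1 : 1 ≤ padicValInt p b := by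
    have := (padicValInt_dvd_iff 1 b).mp (by simpa using hpb)
    exact this.resolve_left hb.ne_zero
  have h2 : ¬2 ≤ padicValInt p b := fun h2 ↦
    hp (hb _ (by simpa [sq] using (padicValInt_dvd_iff 2 b).mpr (Or.inr h2)))
  omega

theorem isSquare_intCast_zmod_of_conicSolvable {p : ℕ} [Fact p.Prime] {a b : ℤ} (ha : a ≠ 0)
    (hb : Squarefree b) (hpb : (p : ℤ) ∣ b) (h : ConicSolvable (a : ℚ_[p]) b) :
    IsSquare (a : ZMod p) := by
  obtain ⟨u, v, huv⟩ := (conicSolvable_iff_isNorm (by exact_mod_cast ha)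
    (by exact_mod_cast hb.ne_zero)).mp h
  have hodd : Odd (b : ℚ_[p]).valuation := by
    rw [Padic.valuation_intCast, padicValInt_eq_one_of_squarefree hb hpb]; exact odd_one
  simpa using
    Padic.isSquare_toZMod_of_sq_sub_mul_sq_eq (a := (a : ℤ_[p])) hodd (by simpa using huv)

theorem ZMod.isSquare_intCast_of_squarefree (a : ℤ) {m : ℕ} (hm : Squarefree m)
    (h : ∀ p : ℕ, p.Prime → p ∣ m → IsSquare (a : ZMod p)) : IsSquare (a : ZMod m) := by
  induction m using Nat.recOnPosPrimePosCoprime with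
  | prime_pow p n hp hn =>
    obtain rfl : n = 1 := ((Nat.squarefree_pow_iff hp.ne_one hn.ne').mp hm).2
    rw [pow_one] at h ⊢
    exact h p hp dvd_rfl
  | zero => exact absurd hm not_squarefree_zero
  | one => exact ⟨0, Subsingleton.elim _ _⟩
  | coprime m n _ _ hmn ihm ihn =>
    let e := ZMod.chineseRemainder hmn
    obtain ⟨r, hr⟩ := ihm (hm.squarefree_of_dvd (dvd_mul_right m n))
      fun p hp hpm ↦ h p hp (hpm.mul_right n)
    obtain ⟨s, hs⟩ := ihn (hm.squarefree_of_dvd (dvd_mul_left n m))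
      fun p hp hpn ↦ h p hp (hpn.mul_left m)
    have hpair : IsSquare (e (a : ZMod (m * n))) :=
      ⟨(r, s), by rw [map_intCast]; exact Prod.ext (by simpa using hr) (by simpa using hs)⟩
    simpa using hpair.map e.symm

theorem Int.exists_sq_sub_dvd_of_isSquare {a b : ℤ} (hb : b ≠ 0)
    (h : IsSquare (a : ZMod b.natAbs)) : ∃ t : ℤ, b ∣ t ^ 2 - a ∧ (2 * t) ^ 2 ≤ b ^ 2 := by
  have : NeZero b.natAbs := ⟨Int.natAbs_ne_zero.mpr hb⟩
  obtain ⟨r, hr⟩ := h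
  refine ⟨r.valMinAbs, ?_, ?_⟩
  · rw [← Int.natAbs_dvd, ← ZMod.intCast_zmod_eq_zero_iff_dvd]
    push_cast
    rw [hr]; ring
  · have := r.valMinAbs_mem_Ioc
    rw [Set.mem_Ioc] at this
    rw [← Int.natAbs_sq b]
    nlinarith

theorem Int.exists_squarefree_mul_sq {c : ℤ} (hc : c ≠ 0) :
    ∃ d k : ℤ, Squarefree d ∧ k ≠ 0 ∧ c = d * k ^ 2 := by
  obtain ⟨m, k, hmk, hm⟩ := Nat.sq_mul_squarefree c.natAbs
  have hk : k ≠ 0 := by rintro rfl; simp [eq_comm, hc] at hmk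
  refine ⟨c.sign * m, k, ?_, Int.natCast_ne_zero.mpr hk, ?_⟩
  · rw [← Int.squarefree_natAbs]
    simpa [Int.natAbs_mul, Int.natAbs_sign_of_ne_zero hc] using hm
  · conv_lhs => rw [← Int.sign_mul_natAbs c, ← hmk]
    push_cast; ring

theorem Rat.exists_squarefree_mul_sq {x : ℚ} (hx : x ≠ 0) :
    ∃ (a : ℤ) (s : ℚ), Squarefree a ∧ s ≠ 0 ∧ x = a * s ^ 2 := by
  obtain ⟨a, k, ha, hk, hak⟩ := Int.exists_squarefree_mul_sq
    (mul_ne_zero (Rat.num_ne_zero.mpr hx) (Int.natCast_ne_zero.mpr x.den_nz))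
  refine ⟨a, k / x.den, ha, by simp [hk], ?_⟩
  have hak' : (x.num : ℚ) * x.den = a * k ^ 2 := by exact_mod_cast hak
  rw [div_pow, ← mul_div_assoc, ← hak', eq_div_iff (by positivity), sq, ← mul_assoc,
    Rat.mul_den_eq_num]

theorem abs_lt_of_mul_eq_sq_sub {a b c t : ℤ} (hab : |a| ≤ |b|) (hb : 1 < |b|)
    (ht : (2 * t) ^ 2 ≤ b ^ 2) (h : b * c = t ^ 2 - a) : |c| < |b| := by
  have h1 : |b| * |c| ≤ t ^ 2 + |b| := by
    rw [← abs_mul, h]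
    calc |t ^ 2 - a| ≤ |t ^ 2| + |a| := abs_sub _ _
      _ ≤ t ^ 2 + |b| := by rw [abs_of_nonneg (sq_nonneg t)]; linarith
  have h2 : (2 * t) ^ 2 ≤ |b| ^ 2 := by rwa [sq_abs]
  nlinarith

theorem conicSolvable_intCast_iff_of_mul_eq_sq_sub {K : Type*} [Field K] [CharZero K]
    {a b d k t : ℤ} (ha : a ≠ 0) (hb : b ≠ 0) (hd : d ≠ 0) (hk : k ≠ 0)
    (h : b * (d * k ^ 2) = t ^ 2 - a) : ConicSolvable (a : K) b ↔ ConicSolvable (a : K) d := by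
  rw [← conicSolvable_mul_sq_right (b := (d : K)) (by exact_mod_cast hk : (k : K) ≠ 0)]
  exact conicSolvable_iff_of_mul_eq_sq_sub (t := (t : K)) (by exact_mod_cast ha)
    (by exact_mod_cast hb) (by simp [hd, hk]) (by exact_mod_cast h)

theorem conicSolvable_of_abs_le_one {a b : ℤ} (ha : a ≠ 0) (hb : b ≠ 0) (ha1 : |a| ≤ 1)
    (hb1 : |b| ≤ 1) (hℝ : ConicSolvable (a : ℝ) b) : ConicSolvable (a : ℚ) b := by
  rw [abs_le] at ha1 hb1
  obtain rfl | rfl : a = 1 ∨ a = -1 := by omega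
  · exact ⟨1, 0, by simp⟩
  obtain rfl | rfl : b = 1 ∨ b = -1 := by omega
  · exact ⟨0, 1, by simp⟩
  · obtain ⟨x, y, h⟩ := hℝ
    push_cast at h
    nlinarith [sq_nonneg x, sq_nonneg y]

theorem conicSolvable_of_local_of_squarefree {a b : ℤ} (ha : Squarefree a) (hb : Squarefree b)
    (hℝ : ConicSolvable (a : ℝ) b)
    (hp : ∀ (p : ℕ) [Fact p.Prime], ConicSolvable (a : ℚ_[p]) b) :
    ConicSolvable (a : ℚ) b := by
  induction hn : a.natAbs + b.natAbs using Nat.strong_induction_on generalizing a b with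
  | _ n ih =>
  wlog hab : |a| ≤ |b| generalizing a b
  · exact conicSolvable_comm.mp (this hb ha (conicSolvable_comm.mp hℝ)
      (fun p _ ↦ conicSolvable_comm.mp (hp p)) (by omega) (le_of_not_ge hab))
  rcases le_or_gt |b| 1 with hb1 | hb1
  · exact conicSolvable_of_abs_le_one ha.ne_zero hb.ne_zero (hab.trans hb1) hb1 hℝ
  have hsq : IsSquare (a : ZMod b.natAbs) :=
    ZMod.isSquare_intCast_of_squarefree a (Int.squarefree_natAbs.mpr hb) fun p hpp hpb ↦
      haveI := Fact.mk hpp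
      isSquare_intCast_zmod_of_conicSolvable ha.ne_zero hb (Int.natCast_dvd.mpr hpb) (hp p)
  obtain ⟨t, ⟨c, hc⟩, ht⟩ := Int.exists_sq_sub_dvd_of_isSquare hb.ne_zero hsq
  rcases eq_or_ne c 0 with rfl | hc0
  · have hat : a = t ^ 2 := by linear_combination -hc
    have ht0 : t ≠ 0 := by rintro rfl; simp [hat] at ha
    exact ⟨(t : ℚ)⁻¹, 0, by simp [hat, ht0]⟩
  obtain ⟨d, k, hd, hk, rfl⟩ := Int.exists_squarefree_mul_sq hc0
  have hdb : |d| < |b| := calc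
    |d| ≤ |d * k ^ 2| := by
      rw [abs_mul]
      exact le_mul_of_one_le_right (abs_nonneg d) (Int.one_le_abs (pow_ne_zero 2 hk))
    _ < |b| := abs_lt_of_mul_eq_sq_sub hab hb1 ht hc.symm
  have step (K : Type) [Field K] [CharZero K] :=
    conicSolvable_intCast_iff_of_mul_eq_sq_sub (K := K) ha.ne_zero hb.ne_zero hd.ne_zero hk
      hc.symm
  refine (step ℚ).mpr (ih _ ?_ ha hd ((step ℝ).mp hℝ) (fun p _ ↦ (step ℚ_[p]).mp (hp p)) rfl)
  rw [Int.abs_eq_natAbs, Int.abs_eq_natAbs] at hdb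
  omega

/-- (Local-to-global principle for conics over `ℚ`.) For nonzero rationals `x, y`, the
conic `x·R² + y·S² = 1` has a rational solution iff it has a solution over `ℝ` and over
`ℚ_p` for every prime `p`. -/
theorem rat_conic_hasse_principle (x y : ℚ) (hx : x ≠ 0) (hy : y ≠ 0) :
    (∃ R S : ℚ, x * R ^ 2 + y * S ^ 2 = 1) ↔
      ((∃ R S : ℝ, (x : ℝ) * R ^ 2 + (y : ℝ) * S ^ 2 = 1) ∧
        ∀ (p : ℕ) [Fact p.Prime],
          ∃ R S : ℚ_[p], (x : ℚ_[p]) * R ^ 2 + (y : ℚ_[p]) * S ^ 2 = 1) := by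
  refine ⟨fun h ↦ ⟨ConicSolvable.map (Rat.castHom ℝ) h,
    fun p _ ↦ ConicSolvable.map (Rat.castHom ℚ_[p]) h⟩, ?_⟩
  rintro ⟨hℝ, hp⟩
  obtain ⟨a, s, ha, hs, rfl⟩ := Rat.exists_squarefree_mul_sq hx
  obtain ⟨b, w, hb, hw, rfl⟩ := Rat.exists_squarefree_mul_sq hy
  have reduce (K : Type) [Field K] [CharZero K] :
      ConicSolvable ((a * s ^ 2 : ℚ) : K) ((b * w ^ 2 : ℚ) : K) ↔ ConicSolvable (a : K) b := by
    push_cast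
    rw [conicSolvable_mul_sq_left (by simpa), conicSolvable_mul_sq_right (by simpa)]
  exact (reduce ℚ).mpr (conicSolvable_of_local_of_squarefree ha hb ((reduce ℝ).mp hℝ)
    fun p _ ↦ (reduce ℚ_[p]).mp (hp p))
end
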